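/- Let a > b, let f : ℝ → ℝ^d be C¹ with each component C¹, and suppose u ↦ M(f(u)) is strictly convex where M(x) = a₁x₁ + ⋯ + a_d x_d is linear. Define γ = (f(a)-f(b))/(a-b) ∈ ℝ^d and u(x,t) = a if M(x - γt) < 0, u(x,t) = b if M(x - γt) > 0. Then for every k ∈ ℝ and every nonnegative test function φ ∈ C_c^∞(ℝ^d × (0,∞)), ∫₀^∞∫_{ℝ^d} ( |u-k| ∂φ/∂t + sgn(u-k)(f(u)-f(k))·∇_x φ ) dx dt ≥ 0. -/

import Mathlib

open MeasureTheory Filter Set Metric Topology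

section Aux

variable {G : Type*} [NormedAddCommGroup G] [NormedSpace ℝ G]
  [MeasurableSpace G] [BorelSpace G] [FiniteDimensional ℝ G]
  {μ : Measure G} [μ.IsAddHaarMeasure]

lemma kruzkov_halfspace (φ : G → ℝ) (hφ : ContDiff ℝ 1 φ) (hc : HasCompactSupport φ)
    (hpos : ∀ z, 0 ≤ φ z) (L : G →ₗ[ℝ] ℝ) (c : ℝ) (W : G) (hLW : 0 ≤ L W) :
    0 ≤ ∫ z, (if L z < c then fderiv ℝ φ z W else 0) ∂μ := by
  obtain ⟨Cl, hlip⟩ := ContDiff.lipschitzWith_of_hasCompactSupport hc hφ one_ne_zero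
  have Lcont : Continuous L := L.continuous_of_finiteDimensional
  set K : Set G := cthickening ‖W‖ (tsupport φ) with hKdef
  have hKc : IsCompact K := hc.cthickening
  have htsK : tsupport φ ⊆ K := self_subset_cthickening _
  set S : ℝ → Set G := fun r => {z : G | L z < r} with hSdef
  have hSm : ∀ r, MeasurableSet (S r) :=
    fun r => (isOpen_lt Lcont continuous_const).measurableSet
  set g : G → ℝ := (S c ∩ K).indicator (fun _ => (1:ℝ)) with hgdef
  have hgi : Integrable g μ := by
    rw [hgdef, integrable_indicator_iff ((hSm c).inter hKc.measurableSet)]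
    exact (integrableOn_const_iff).2
      (Or.inr ((measure_mono inter_subset_right).trans_lt hKc.measure_lt_top))
  have A := hlip.integral_inv_smul_sub_mul_tendsto_integral_lineDeriv_mul (μ := μ) hgi W
  have hφi : Integrable φ μ := hφ.continuous.integrable_of_hasCompactSupport hc
  have hIint : ∀ r, Integrable ((S r).indicator φ) μ := fun r => hφi.indicator (hSm r)
  have hImono : ∀ r r', r ≤ r' →
      ∫ x, (S r).indicator φ x ∂μ ≤ ∫ x, (S r').indicator φ x ∂μ := by
    intro r r' h
    refine integral_mono (hIint r) (hIint r') ?_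
    intro x
    exact Set.indicator_le_indicator_of_subset
      (fun z hz => lt_of_lt_of_le hz h) hpos x
  have hJ : ∀ t : ℝ, 0 ≤ t → t ≤ 1 →
      ∫ x, φ (x + t • W) * g x ∂μ = ∫ x, (S (c + t * L W)).indicator φ x ∂μ := by
    intro t ht0 ht1
    have step1 : ∀ x, φ (x + t • W) * g x = (S (c + t * L W)).indicator φ (x + t • W) := by
      intro x
      have hmem : (x + t • W) ∈ S (c + t * L W) ↔ x ∈ S c := by
        simp only [hSdef, mem_setOf_eq, map_add, LinearMap.map_smul, smul_eq_mul]
        constructor <;> intro h <;> linarith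
      by_cases hx : x ∈ S c
      · by_cases hxK : x ∈ K
        · rw [indicator_of_mem (hmem.2 hx), hgdef, indicator_of_mem (mem_inter hx hxK), mul_one]
        · have hz : φ (x + t • W) = 0 := by
            by_contra h
            apply hxK
            refine mem_cthickening_of_dist_le x (x + t • W) _ _ (subset_tsupport _ h) ?_
            rw [dist_eq_norm]
            have : ‖x - (x + t • W)‖ = t * ‖W‖ := by
              rw [show x - (x + t • W) = -(t • W) by abel, norm_neg, norm_smul,
                Real.norm_eq_abs, abs_of_nonneg ht0]
            rw [this]
            calc t * ‖W‖ ≤ 1 * ‖W‖ := by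
                  exact mul_le_mul_of_nonneg_right ht1 (norm_nonneg _)
              _ = ‖W‖ := one_mul _
          rw [indicator_of_mem (hmem.2 hx), hz, zero_mul]
      · rw [indicator_of_notMem (fun h => hx (hmem.1 h)), hgdef,
          indicator_of_notMem (fun h => hx h.1), mul_zero]
    calc ∫ x, φ (x + t • W) * g x ∂μ
        = ∫ x, (S (c + t * L W)).indicator φ (x + t • W) ∂μ := by simp_rw [step1]
      _ = ∫ x, (S (c + t * L W)).indicator φ x ∂μ :=
          integral_add_right_eq_self _ (t • W)
  have hev : ∀ᶠ t in 𝓝[>] (0:ℝ), 0 ≤ ∫ x, (t⁻¹ • (φ (x + t • W) - φ x)) * g x ∂μ := by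
    filter_upwards [Ioc_mem_nhdsGT zero_lt_one] with t ht
    obtain ⟨B, hB⟩ := hc.exists_bound_of_continuous hφ.continuous
    have hint1 : Integrable (fun x => φ (x + t • W) * g x) μ :=
      hgi.bdd_mul ((hφ.continuous.comp (continuous_add_right _)).aestronglyMeasurable)
        (Eventually.of_forall fun x => hB _)
    have hint2 : Integrable (fun x => φ x * g x) μ :=
      hgi.bdd_mul hφ.continuous.aestronglyMeasurable (Eventually.of_forall hB)
    have hrw : ∫ x, (t⁻¹ • (φ (x + t • W) - φ x)) * g x ∂μ
        = t⁻¹ * (∫ x, φ (x + t • W) * g x ∂μ - ∫ x, φ x * g x ∂μ) := by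
      rw [← integral_sub hint1 hint2, ← integral_const_mul]
      congr 1; ext x; simp only [smul_eq_mul]; ring
    rw [hrw]
    have e0 : ∫ x, φ x * g x ∂μ = ∫ x, (S c).indicator φ x ∂μ := by
      have h := hJ 0 le_rfl zero_le_one
      simpa using h
    have et := hJ t ht.1.le ht.2
    rw [et, e0]
    have hle : (c : ℝ) ≤ c + t * L W := by nlinarith [ht.1.le, hLW]
    have hm := hImono c (c + t * L W) hle
    have ht' : 0 ≤ t⁻¹ := inv_nonneg.2 ht.1.le
    nlinarith
  have hlim : 0 ≤ ∫ x, lineDeriv ℝ φ x W * g x ∂μ := ge_of_tendsto A hev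
  have hEq : (fun x => lineDeriv ℝ φ x W * g x)
      = fun x => if L x < c then fderiv ℝ φ x W else 0 := by
    funext x
    have hld : lineDeriv ℝ φ x W = fderiv ℝ φ x W :=
      (hφ.differentiable one_ne_zero x).lineDeriv_eq_fderiv
    by_cases hx : L x < c
    · by_cases hxK : x ∈ K
      · rw [hgdef, indicator_of_mem (mem_inter (show x ∈ S c from hx) hxK), mul_one, hld, if_pos hx]
      · have hfz : fderiv ℝ φ x = 0 := by
          by_contra h
          exact hxK (htsK (support_fderiv_subset ℝ (Function.mem_support.2 h)))
        rw [hgdef, indicator_of_notMem (fun h => hxK h.2), mul_zero, if_pos hx, hfz]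
        simp
    · rw [hgdef, indicator_of_notMem (fun h => hx h.1), mul_zero, if_neg hx]
  rw [hEq] at hlim
  exact hlim

lemma kruzkov_zero (φ : G → ℝ) (hφ : ContDiff ℝ 1 φ) (hc : HasCompactSupport φ)
    (hpos : ∀ z, 0 ≤ φ z) (W : G) :
    ∫ z, fderiv ℝ φ z W ∂μ = 0 := by
  have h1 := kruzkov_halfspace (μ := μ) φ hφ hc hpos 0 1 W le_rfl
  have h2 := kruzkov_halfspace (μ := μ) φ hφ hc hpos 0 1 (-W) le_rfl
  simp only [LinearMap.zero_apply, zero_lt_one, if_true, map_neg] at h1 h2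
  rw [integral_neg] at h2
  linarith

end Aux

lemma kruzkov_oleinik {F : ℝ → ℝ} (hF : ConvexOn ℝ Set.univ F) {a b : ℝ} (hab : b < a) (k : ℝ) :
    Real.sign (b - k) * (F b - F k) - |b - k| * ((a - b)⁻¹ * (F a - F b))
    ≤ Real.sign (a - k) * (F a - F k) - |a - k| * ((a - b)⁻¹ * (F a - F b)) := by
  have hba : (0:ℝ) < a - b := by linarith
  have hs : (a - b) * ((a - b)⁻¹ * (F a - F b)) = F a - F b := by
    field_simp
  rcases lt_trichotomy k b with hkb | hkb | hkb
  · have h1 : Real.sign (a - k) = 1 := Real.sign_of_pos (by linarith)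
    have h2 : Real.sign (b - k) = 1 := Real.sign_of_pos (by linarith)
    have h3 : |a - k| = a - k := abs_of_pos (by linarith)
    have h4 : |b - k| = b - k := abs_of_pos (by linarith)
    rw [h1, h2, h3, h4]
    nlinarith [hs]
  · subst hkb
    simp only [sub_self, Real.sign_zero, abs_zero, zero_mul, mul_zero, sub_zero, zero_sub]
    have h1 : Real.sign (a - k) = 1 := Real.sign_of_pos (by linarith)
    have h3 : |a - k| = a - k := abs_of_pos (by linarith)
    rw [h1, h3]
    nlinarith [hs]
  · rcases lt_trichotomy k a with hka | hka | hka
    · -- b < k < a : the convexity case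
      have h1 : Real.sign (a - k) = 1 := Real.sign_of_pos (by linarith)
      have h2 : Real.sign (b - k) = -1 := Real.sign_of_neg (by linarith)
      have h3 : |a - k| = a - k := abs_of_pos (by linarith)
      have h4 : |b - k| = k - b := by rw [abs_of_neg (by linarith)]; ring
      rw [h1, h2, h3, h4]
      have hα : (0:ℝ) ≤ (k - b) / (a - b) := by
        apply div_nonneg <;> linarith
      have hβ : (0:ℝ) ≤ (a - k) / (a - b) := by
        apply div_nonneg <;> linarith
      have hαβ : (k - b) / (a - b) + (a - k) / (a - b) = 1 := by
        field_simp
        ring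
      have hk0 := hF.2 (mem_univ a) (mem_univ b) hα hβ hαβ
      rw [smul_eq_mul, smul_eq_mul, smul_eq_mul, smul_eq_mul] at hk0
      have hxmul : (k - b) / (a - b) * a + (a - k) / (a - b) * b = k := by
        field_simp
        ring
      rw [hxmul] at hk0
      have hk : F k ≤ (k - b) / (a - b) * F a + (a - k) / (a - b) * F b := hk0
      have hk' : (a - b) * F k ≤ (k - b) * F a + (a - k) * F b := by
        have := mul_le_mul_of_nonneg_left hk hba.le
        calc (a - b) * F k ≤ (a - b) * ((k - b) / (a - b) * F a + (a - k) / (a - b) * F b) := this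
          _ = (k - b) * F a + (a - k) * F b := by field_simp
      have key : (a - b) * ((1 * (F a - F k) - (a - k) * ((a - b)⁻¹ * (F a - F b)))
            - (-1 * (F b - F k) - (k - b) * ((a - b)⁻¹ * (F a - F b))))
          = 2 * ((k - b) * F a + (a - k) * F b - (a - b) * F k)
            + (2 * k - a - b) * ((a - b) * ((a - b)⁻¹ * (F a - F b)) - (F a - F b)) := by
        ring
      nlinarith [key, hk', hs, hba]
    · subst hka
      simp only [sub_self, Real.sign_zero, abs_zero, zero_mul, mul_zero, sub_zero, zero_sub]
      have h2 : Real.sign (b - k) = -1 := Real.sign_of_neg (by linarith)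
      have h4 : |b - k| = k - b := by rw [abs_of_neg (by linarith)]; ring
      rw [h2, h4]
      nlinarith [hs]
    · have h1 : Real.sign (a - k) = -1 := Real.sign_of_neg (by linarith)
      have h2 : Real.sign (b - k) = -1 := Real.sign_of_neg (by linarith)
      have h3 : |a - k| = k - a := by rw [abs_of_neg (by linarith)]; ring
      have h4 : |b - k| = k - b := by rw [abs_of_neg (by linarith)]; ring
      rw [h1, h2, h3, h4]
      nlinarith [hs]

theorem stmt_11 (d : ℕ) (hd : 1 ≤ d) (a b : ℝ) (hab : b < a)
    (f : ℝ → EuclideanSpace ℝ (Fin d)) (hf : ContDiff ℝ 1 f)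
    (M : EuclideanSpace ℝ (Fin d) →ₗ[ℝ] ℝ)
    (hconv : StrictConvexOn ℝ Set.univ (fun v : ℝ => M (f v)))
    (γ : EuclideanSpace ℝ (Fin d)) (hγ : γ = (a - b)⁻¹ • (f a - f b))
    (u : EuclideanSpace ℝ (Fin d) → ℝ → ℝ)
    (hu : ∀ x t, u x t = if M (x - t • γ) < 0 then a else b)
    (k : ℝ) (φ : (EuclideanSpace ℝ (Fin d) × ℝ) → ℝ)
    (hφs : ContDiff ℝ (⊤ : ℕ∞) φ) (hφc : HasCompactSupport φ)
    (hφpos : ∀ z, 0 ≤ φ z)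
    (hφsupp : Function.support φ ⊆ Set.univ ×ˢ Set.Ioi (0 : ℝ)) :
    0 ≤ ∫ z : EuclideanSpace ℝ (Fin d) × ℝ,
        (|u z.1 z.2 - k| * fderiv ℝ φ z (0, 1)
          + Real.sign (u z.1 z.2 - k) *
            ∑ i : Fin d,
              (f (u z.1 z.2) i - f k i) * fderiv ℝ φ z (EuclideanSpace.single i 1, 0)) := by
  classical
  haveI : (volume : Measure (EuclideanSpace ℝ (Fin d) × ℝ)).IsAddHaarMeasure := by
    rw [MeasureTheory.Measure.volume_eq_prod]
    infer_instance
  have hφ1 : ContDiff ℝ 1 φ := hφs.of_le (by simp)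
  -- the linear functional L (x,t) = M x - t * M γ
  set L : (EuclideanSpace ℝ (Fin d) × ℝ) →ₗ[ℝ] ℝ :=
    M.comp (LinearMap.fst ℝ (EuclideanSpace ℝ (Fin d)) ℝ) - (M γ) • (LinearMap.snd ℝ (EuclideanSpace ℝ (Fin d)) ℝ) with hLdef
  have hL : ∀ z : EuclideanSpace ℝ (Fin d) × ℝ, L z = M z.1 - z.2 * M γ := by
    intro z
    simp only [hLdef, LinearMap.sub_apply, LinearMap.coe_comp, Function.comp_apply,
      LinearMap.fst_apply, LinearMap.smul_apply, LinearMap.snd_apply, smul_eq_mul]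
    ring
  have hLu : ∀ (x : EuclideanSpace ℝ (Fin d)) (t : ℝ), M (x - t • γ) = L (x, t) := by
    intro x t
    rw [map_sub, _root_.map_smul, hL]
    simp [smul_eq_mul]
  -- the flux vector
  set V : ℝ → EuclideanSpace ℝ (Fin d) × ℝ := fun c => (Real.sign (c - k) • (f c - f k), |c - k|) with hVdef
  -- pointwise identity for the integrand
  have hpt : ∀ (z : EuclideanSpace ℝ (Fin d) × ℝ) (c : ℝ),
      |c - k| * fderiv ℝ φ z (0, 1)
        + Real.sign (c - k) *
          ∑ i : Fin d, (f c i - f k i) * fderiv ℝ φ z (EuclideanSpace.single i 1, 0)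
      = fderiv ℝ φ z (V c) := by
    intro z c
    set D := fderiv ℝ φ z with hD
    have hsum : ∀ w : EuclideanSpace ℝ (Fin d), D ((w, (0:ℝ)) : EuclideanSpace ℝ (Fin d) × ℝ)
        = ∑ i : Fin d, w i * D (EuclideanSpace.single i 1, 0) := by
      intro w
      have hw0 : ∑ i : Fin d, w i • (EuclideanSpace.single i (1:ℝ) : EuclideanSpace ℝ (Fin d)) = w := by
        have h := (EuclideanSpace.basisFun (Fin d) ℝ).sum_repr w
        simpa [EuclideanSpace.basisFun_repr, EuclideanSpace.basisFun_apply] using h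
      have hw1 : ((w, (0:ℝ)) : EuclideanSpace ℝ (Fin d) × ℝ)
          = ∑ i : Fin d, w i • ((EuclideanSpace.single i (1:ℝ), (0:ℝ)) : EuclideanSpace ℝ (Fin d) × ℝ) := by
        refine Prod.ext ?_ ?_
        · simp [Prod.fst_sum, hw0]
        · simp [Prod.snd_sum]
      rw [hw1, map_sum]
      refine Finset.sum_congr rfl fun i _ => ?_
      rw [_root_.map_smul, smul_eq_mul]
    have hVsplit : V c = ((Real.sign (c - k) • (f c - f k), (0:ℝ)) : EuclideanSpace ℝ (Fin d) × ℝ)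
        + (0, |c - k|) := by
      simp [hVdef, Prod.ext_iff]
    rw [hVsplit, map_add]
    rw [hsum]
    have h01 : ((0 : EuclideanSpace ℝ (Fin d)), |c - k|) = |c - k| • ((0 : EuclideanSpace ℝ (Fin d)), (1:ℝ)) := by
      simp [Prod.ext_iff]
    rw [h01, _root_.map_smul, smul_eq_mul]
    have : ∑ i : Fin d, (Real.sign (c - k) • (f c - f k)) i * D (EuclideanSpace.single i 1, 0)
        = Real.sign (c - k) * ∑ i : Fin d, (f c i - f k i) * D (EuclideanSpace.single i 1, 0) := by
      rw [Finset.mul_sum]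
      refine Finset.sum_congr rfl fun i _ => ?_
      have : (Real.sign (c - k) • (f c - f k)) i = Real.sign (c - k) * (f c i - f k i) := by
        simp [PiLp.smul_apply, PiLp.sub_apply, smul_eq_mul]
      rw [this]; ring
    rw [this]
    ring
  -- rewrite the integrand
  have hint_eq : ∀ z : EuclideanSpace ℝ (Fin d) × ℝ,
      (|u z.1 z.2 - k| * fderiv ℝ φ z (0, 1)
        + Real.sign (u z.1 z.2 - k) *
          ∑ i : Fin d, (f (u z.1 z.2) i - f k i) * fderiv ℝ φ z (EuclideanSpace.single i 1, 0))
      = (if L z < 0 then fderiv ℝ φ z (V a - V b) else 0) + fderiv ℝ φ z (V b) := by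
    intro z
    rw [hpt z (u z.1 z.2), hu z.1 z.2, hLu z.1 z.2]
    by_cases h : L (z.1, z.2) < 0
    · rw [if_pos h, if_pos (by simpa using h), map_sub]
      ring
    · rw [if_neg h, if_neg (by simpa using h), zero_add]
  -- integrability facts
  have hfdcont : Continuous (fun z : EuclideanSpace ℝ (Fin d) × ℝ => fderiv ℝ φ z) := hφs.continuous_fderiv (by simp)
  have happly : ∀ w : EuclideanSpace ℝ (Fin d) × ℝ, Continuous (fun z : EuclideanSpace ℝ (Fin d) × ℝ => fderiv ℝ φ z w) := by
    intro w
    exact hfdcont.clm_apply continuous_const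
  have hsupp : ∀ w : EuclideanSpace ℝ (Fin d) × ℝ, HasCompactSupport (fun z : EuclideanSpace ℝ (Fin d) × ℝ => fderiv ℝ φ z w) := by
    intro w
    apply HasCompactSupport.comp_left (g := fun T : (EuclideanSpace ℝ (Fin d) × ℝ) →L[ℝ] ℝ => T w) (hφc.fderiv ℝ)
    simp
  have Lcont : Continuous L := L.continuous_of_finiteDimensional
  have hSm : MeasurableSet {z : EuclideanSpace ℝ (Fin d) × ℝ | L z < 0} :=
    (isOpen_lt Lcont continuous_const).measurableSet
  have hint1 : Integrable (fun z : EuclideanSpace ℝ (Fin d) × ℝ => if L z < 0 then fderiv ℝ φ z (V a - V b) else 0) := by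
    have h := (((happly (V a - V b)).integrable_of_hasCompactSupport (μ := volume)
      (hsupp (V a - V b))).indicator hSm)
    refine h.congr (Eventually.of_forall fun z => ?_)
    simp [Set.indicator_apply, Set.mem_setOf_eq]
  have hint2 : Integrable (fun z : EuclideanSpace ℝ (Fin d) × ℝ => fderiv ℝ φ z (V b)) :=
    (happly (V b)).integrable_of_hasCompactSupport (μ := volume) (hsupp (V b))
  -- the sign condition L (V a - V b) ≥ 0
  have hLV : ∀ c : ℝ, L (V c)
      = Real.sign (c - k) * (M (f c) - M (f k))
        - |c - k| * ((a - b)⁻¹ * (M (f a) - M (f b))) := by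
    intro c
    rw [hL]
    simp only [hVdef, _root_.map_smul, map_sub, smul_eq_mul, hγ, _root_.map_smul]
    try ring
  have hLW : 0 ≤ L (V a - V b) := by
    rw [map_sub, hLV a, hLV b]
    have := kruzkov_oleinik (F := fun v : ℝ => M (f v)) hconv.convexOn hab k
    simpa using this
  -- put it together
  calc (0:ℝ)
      ≤ ∫ z : EuclideanSpace ℝ (Fin d) × ℝ, (if L z < 0 then fderiv ℝ φ z (V a - V b) else 0) :=
        kruzkov_halfspace φ hφ1 hφc hφpos L 0 (V a - V b) hLW
    _ = (∫ z : EuclideanSpace ℝ (Fin d) × ℝ, (if L z < 0 then fderiv ℝ φ z (V a - V b) else 0)) + 0 := by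
        rw [add_zero]
    _ = (∫ z : EuclideanSpace ℝ (Fin d) × ℝ, (if L z < 0 then fderiv ℝ φ z (V a - V b) else 0))
          + ∫ z : EuclideanSpace ℝ (Fin d) × ℝ, fderiv ℝ φ z (V b) := by
        rw [kruzkov_zero φ hφ1 hφc hφpos (V b)]
    _ = ∫ z : EuclideanSpace ℝ (Fin d) × ℝ, ((if L z < 0 then fderiv ℝ φ z (V a - V b) else 0) + fderiv ℝ φ z (V b)) :=
        (integral_add hint1 hint2).symm
    _ = _ := by
        congr 1
        funext z
        exact (hint_eq z).symm
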